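/- Fix an odd prime p and integers l ≥ 1, k ≥ 1. Define the degree of a completely unadmissable sequence (ε_1, s_1, ..., ε_k, s_k; l) to be d = 2l + 1 + 2(p-1)(s_1 + ... + s_k) - (ε_1 + ... + ε_k) - k. Then the minimum of d over all completely unadmissable sequences of length k is exactly 2·l·p^k + 1 - 2k, achieved by s_i = p^{k-i}·l and ε_i = 1 for all i. -/
import Mathlib


/-- A completely unadmissable sequence `(ε_1, s_1, …, ε_k, s_k; l)`. -/
def IsCU (p l k : ℕ) (s ε : ℕ → ℕ) : Prop :=
  (∀ i, 1 ≤ i → i ≤ k → ε i ≤ 1) ∧ l ≤ s k ∧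
    ∀ i, 1 ≤ i → i < k → ((p : ℤ) * s (i + 1) - ε (i + 1) < s i)

/-- The degree `2l + 1 + 2(p−1)(s_1+⋯+s_k) − (ε_1+⋯+ε_k) − k` of the class
`β^{ε_1}Q^{s_1}⋯β^{ε_k}Q^{s_k}(ι)`. -/
def cuDeg (p l k : ℕ) (s ε : ℕ → ℕ) : ℤ :=
  2 * l + 1 + 2 * ((p : ℤ) - 1) * (∑ i ∈ Finset.Icc 1 k, (s i : ℤ))
    - (∑ i ∈ Finset.Icc 1 k, (ε i : ℤ)) - k

lemma geom_aux (p k : ℕ) :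
    ((p : ℤ) - 1) * (∑ i ∈ Finset.Icc 1 k, (p : ℤ) ^ (k - i)) = (p : ℤ) ^ k - 1 := by
  have h1 : (∑ i ∈ Finset.Icc 1 k, (p : ℤ) ^ (k - i))
      = ∑ j ∈ Finset.range k, (p : ℤ) ^ j := by
    apply Finset.sum_nbij' (fun i => k - i) (fun j => k - j)
    · intro i hi; simp only [Finset.mem_Icc] at hi; simp only [Finset.mem_range]; omega
    · intro j hj; simp only [Finset.mem_range] at hj; simp only [Finset.mem_Icc]; omega
    · intro i hi; simp only [Finset.mem_Icc] at hi; omega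
    · intro j hj; simp only [Finset.mem_range] at hj; omega
    · intro i hi; rfl
  rw [h1, mul_comm, geom_sum_mul]

lemma cu_lower (p l k : ℕ) (s ε : ℕ → ℕ) (h : IsCU p l k s ε) :
    ∀ i, 1 ≤ i → i ≤ k → p ^ (k - i) * l ≤ s i := by
  obtain ⟨hε, hsk, hcu⟩ := h
  -- step: for 1 ≤ i < k, p * s (i+1) ≤ s i
  have step : ∀ i, 1 ≤ i → i < k → p * s (i + 1) ≤ s i := by
    intro i h1 h2
    have h3 := hcu i h1 h2
    have h4 : ε (i + 1) ≤ 1 := hε (i + 1) (by omega) (by omega)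
    have : (p : ℤ) * s (i + 1) ≤ s i := by push_cast at h3 ⊢; omega
    exact_mod_cast this
  have key : ∀ j, j ≤ k - 1 → p ^ j * l ≤ s (k - j) := by
    intro j
    induction j with
    | zero => intro _; simpa using hsk
    | succ n ih =>
      intro hn
      have h1 : p ^ n * l ≤ s (k - n) := ih (by omega)
      have h2 : k - (n + 1) + 1 = k - n := by omega
      have h3 : p * s (k - n) ≤ s (k - (n + 1)) := by
        have := step (k - (n + 1)) (by omega) (by omega)
        rwa [h2] at this
      calc p ^ (n + 1) * l = p * (p ^ n * l) := by ring
      _ ≤ p * s (k - n) := by exact Nat.mul_le_mul_left p h1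
      _ ≤ s (k - (n + 1)) := h3
  intro i h1 h2
  have := key (k - i) (by omega)
  have h3 : k - (k - i) = i := by omega
  rwa [h3] at this

/-- the minimum of the degree over all completely unadmissable
sequences of length `k` is exactly `2·l·p^k + 1 − 2k`, achieved by
`s_i = p^{k−i}·l` and `ε_i = 1` for all `i`. -/
theorem cu_min_degree
    (p l k : ℕ) (hp : p.Prime) (hpodd : Odd p) (hl : 1 ≤ l) (hk : 1 ≤ k) :
    IsLeast {d : ℤ | ∃ s ε : ℕ → ℕ, IsCU p l k s ε ∧ d = cuDeg p l k s ε}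
      (2 * l * p ^ k + 1 - 2 * k) ∧
    IsCU p l k (fun i => p ^ (k - i) * l) (fun _ => 1) ∧
    cuDeg p l k (fun i => p ^ (k - i) * l) (fun _ => 1)
      = 2 * l * p ^ k + 1 - 2 * k := by
  have hp2 : 2 ≤ p := hp.two_le
  have hcard : (Finset.Icc 1 k).card = k := by rw [Nat.card_Icc]; omega
  -- witness is CU
  have hwit : IsCU p l k (fun i => p ^ (k - i) * l) (fun _ => 1) := by
    refine ⟨fun i _ _ => le_refl 1, by simp, fun i h1 h2 => ?_⟩
    simp only
    have h3 : k - (i + 1) + 1 = k - i := by omega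
    push_cast
    have : (p : ℤ) * ((p:ℤ) ^ (k - (i+1)) * l) = (p:ℤ) ^ (k - i) * l := by
      rw [← h3]; ring
    rw [this]
    have : (0:ℤ) < (p:ℤ) ^ (k - i) * l := by positivity
    omega
  -- witness degree
  have hsum : (∑ i ∈ Finset.Icc 1 k, ((p ^ (k - i) * l : ℕ) : ℤ))
      = (∑ i ∈ Finset.Icc 1 k, (p : ℤ) ^ (k - i)) * l := by
    rw [Finset.sum_mul]
    apply Finset.sum_congr rfl
    intro i _; push_cast; ring
  have hdeg : cuDeg p l k (fun i => p ^ (k - i) * l) (fun _ => 1)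
      = 2 * l * p ^ k + 1 - 2 * k := by
    unfold cuDeg
    simp only [hsum, Finset.sum_const, hcard, nsmul_eq_mul, Nat.cast_one, mul_one]
    have hg := geom_aux p k
    have : 2 * ((p:ℤ) - 1) * ((∑ i ∈ Finset.Icc 1 k, (p : ℤ) ^ (k - i)) * l)
        = 2 * (((p:ℤ)^k - 1) * l) := by
      rw [← hg]; ring
    rw [this]; push_cast; ring
  refine ⟨⟨⟨_, _, hwit, hdeg.symm⟩, ?_⟩, hwit, hdeg⟩
  rintro d ⟨s, ε, hcu, rfl⟩
  have hε := hcu.1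
  have hS : ((∑ i ∈ Finset.Icc 1 k, (p : ℤ) ^ (k - i)) * l)
      ≤ ∑ i ∈ Finset.Icc 1 k, (s i : ℤ) := by
    rw [Finset.sum_mul]
    apply Finset.sum_le_sum
    intro i hi
    simp only [Finset.mem_Icc] at hi
    have := cu_lower p l k s ε hcu i hi.1 hi.2
    have := (Nat.cast_le (α := ℤ)).2 this
    push_cast at this ⊢
    linarith
  have hE : (∑ i ∈ Finset.Icc 1 k, (ε i : ℤ)) ≤ k := by
    calc (∑ i ∈ Finset.Icc 1 k, (ε i : ℤ)) ≤ ∑ i ∈ Finset.Icc 1 k, (1:ℤ) := by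
          apply Finset.sum_le_sum
          intro i hi
          simp only [Finset.mem_Icc] at hi
          exact_mod_cast hε i hi.1 hi.2
    _ = k := by simp [hcard]
  unfold cuDeg
  have hg := geom_aux p k
  have hmul : 2 * ((p:ℤ) - 1) * ((∑ i ∈ Finset.Icc 1 k, (p : ℤ) ^ (k - i)) * l)
      ≤ 2 * ((p:ℤ) - 1) * (∑ i ∈ Finset.Icc 1 k, (s i : ℤ)) := by
    apply mul_le_mul_of_nonneg_left hS
    have : (2:ℤ) ≤ (p:ℤ) := by exact_mod_cast hp2
    linarith
  have heq : 2 * ((p:ℤ) - 1) * ((∑ i ∈ Finset.Icc 1 k, (p : ℤ) ^ (k - i)) * l)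
      = 2 * (((p:ℤ)^k - 1) * l) := by rw [← hg]; ring
  rw [heq] at hmul
  push_cast
  linarith
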